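/- Let a : ℕ → ℕ be injective and let ψ_k be as above (k ≥ 2) with ψ_k supported in [-3/(2k²), -1/(2k²)]. Define f(x) = Σ_{k=2}^∞ ψ_k(x - a(k)). Then the series converges uniformly on compact sets, f is continuous, and for every n ∈ ℕ: f'(n) = k·φ'(-1/2) if n = a(k) for some k ≥ 2, and f'(n) = 0 otherwise. -/

import Mathlib

/-! Each summand `ψ_k(· - a(k))` vanishes outside `(a(k) - 1/2, a(k) + 1/2)`. As `a` is injective,
`a(k) → ∞`, so on a bounded set only finitely many summands are nonzero and the partial sums are
eventually equal to `f`; and near an integer `n` at most one summand, the one with `a(k) = n`, is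
nonzero. Hence `f'(n)` is either `0` or, by the chain rule, `(1/k) · k² · φ'(-1/2)`. -/

/-- The canonical bump function. -/
noncomputable def bumpFn (x : ℝ) : ℝ :=
  if |x| < 1 then Real.exp (-(x ^ 2) / (1 - x ^ 2)) else 0

/-- `ψ(x) = φ(x - 1/2)`. -/
noncomputable def psiFn (x : ℝ) : ℝ := bumpFn (x - 1 / 2)

/-- `ψ_k(x) = (1/k)·ψ(k²x)`. -/
noncomputable def psik (k : ℕ) (x : ℝ) : ℝ := (1 / k) * psiFn (k ^ 2 * x)

/-- The `k`-th summand `ψ_k(x - a(k))` (only for `k ≥ 2`). -/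
noncomputable def summand (a : ℕ → ℕ) (k : ℕ) (x : ℝ) : ℝ :=
  if 2 ≤ k then psik k (x - a k) else 0

/-- `f(x) = ∑_{k=2}^∞ ψ_k(x - a(k))`. -/
noncomputable def PRfun (a : ℕ → ℕ) (x : ℝ) : ℝ := ∑' k, summand a k x

open Filter Set Topology

theorem tendstoUniformlyOn_of_eventually_eqOn {ι α β : Type*} [UniformSpace β]
    {F : ι → α → β} {f : α → β} {p : Filter ι} {s : Set α}
    (h : ∀ᶠ n in p, EqOn (F n) f s) : TendstoUniformlyOn F f p s :=
  fun _ hu => h.mono fun _ hn _ hx => (hn hx).symm ▸ refl_mem_uniformity hu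

theorem tendstoUniformlyOn_sum_range_of_eventually_eq_zero {α M : Type*} [AddCommMonoid M]
    [UniformSpace M] {f : ℕ → α → M} {s : Set α} (h : ∀ᶠ j in atTop, ∀ x ∈ s, f j x = 0) :
    TendstoUniformlyOn (fun N x => ∑ k ∈ Finset.range N, f k x) (fun x => ∑' k, f k x)
      atTop s := by
  obtain ⟨N₀, hN₀⟩ := eventually_atTop.1 h
  refine tendstoUniformlyOn_of_eventually_eqOn ?_
  filter_upwards [eventually_ge_atTop N₀] with N hN x hx
  refine (tsum_eq_sum fun j hj => hN₀ j ?_ x hx).symm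
  simp only [Finset.mem_range, not_lt] at hj
  omega

theorem bumpFn_eq_mul_expNegInvGlue (x : ℝ) :
    bumpFn x = Real.exp 1 * expNegInvGlue (1 - x ^ 2) := by
  unfold bumpFn expNegInvGlue
  split_ifs with h h' h'
  · nlinarith [abs_lt.1 h]
  · rw [← Real.exp_add]
    congr 1
    have : 1 - x ^ 2 ≠ 0 := by nlinarith [abs_lt.1 h]
    field_simp
    ring
  · simp
  · nlinarith [sq_abs x, not_lt.1 h]

theorem contDiff_bumpFn {n : ℕ∞} : ContDiff ℝ n bumpFn := by
  rw [funext bumpFn_eq_mul_expNegInvGlue]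
  exact contDiff_const.mul (expNegInvGlue.contDiff.comp (by fun_prop))

theorem differentiable_bumpFn : Differentiable ℝ bumpFn :=
  (contDiff_bumpFn (n := 1)).differentiable one_ne_zero

theorem abs_lt_of_bumpFn_ne_zero {x : ℝ} (h : bumpFn x ≠ 0) : |x| < 1 := by
  by_contra hx
  exact h (if_neg hx)

theorem abs_lt_of_psik_ne_zero {k : ℕ} (hk : 2 ≤ k) {x : ℝ} (h : psik k x ≠ 0) :
    |x| < 1 / 2 := by
  have hb : |(k : ℝ) ^ 2 * x - 1 / 2| < 1 :=
    abs_lt_of_bumpFn_ne_zero (right_ne_zero_of_mul h)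
  have hk4 : (4 : ℝ) ≤ (k : ℝ) ^ 2 := by
    have : (2 : ℝ) ≤ k := by exact_mod_cast hk
    nlinarith
  rw [abs_lt] at hb ⊢
  constructor <;> nlinarith

theorem summand_ne_zero {a : ℕ → ℕ} {k : ℕ} {x : ℝ} (h : summand a k x ≠ 0) :
    2 ≤ k ∧ |x - a k| < 1 / 2 := by
  unfold summand at h
  split_ifs at h with hk
  · exact ⟨hk, abs_lt_of_psik_ne_zero hk h⟩
  · exact absurd rfl h

theorem continuous_summand (a : ℕ → ℕ) (k : ℕ) : Continuous (summand a k) := by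
  unfold summand psik psiFn
  split_ifs
  · have := differentiable_bumpFn.continuous
    fun_prop
  · exact continuous_const

theorem eq_of_summand_ne_zero {a : ℕ → ℕ} {j n : ℕ} {x : ℝ} (hx : |x - n| < 1 / 2)
    (h : summand a j x ≠ 0) : a j = n := by
  have hj := (summand_ne_zero h).2
  have hdist : |(a j : ℝ) - n| < 1 := by
    calc |(a j : ℝ) - n| = |(x - n) - (x - a j)| := by ring_nf
      _ ≤ |x - n| + |x - a j| := abs_sub _ _
      _ < 1 := by linarith
  rw [abs_lt] at hdist
  have h1 : a j < n + 1 := by exact_mod_cast (by linarith : (a j : ℝ) < n + 1)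
  have h2 : n < a j + 1 := by exact_mod_cast (by linarith : (n : ℝ) < a j + 1)
  omega

theorem eventually_summand_eq_zero_on_bounded {a : ℕ → ℕ} (ha : Function.Injective a)
    {K : Set ℝ} (hK : Bornology.IsBounded K) : ∀ᶠ j in atTop, ∀ x ∈ K, summand a j x = 0 := by
  obtain ⟨r, hr⟩ := hK.subset_closedBall 0
  have ha_large : ∀ᶠ j in atTop, r + 1 < (a j : ℝ) :=
    (tendsto_natCast_atTop_atTop.comp ha.nat_tendsto_atTop).eventually_gt_atTop _
  filter_upwards [ha_large] with j hj x hx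
  by_contra hne
  have hxr : |x| ≤ r := by simpa using hr hx
  have hxj := (summand_ne_zero hne).2
  rw [abs_lt] at hxj
  linarith [le_abs_self x]

theorem tendstoUniformlyOn_PRfun {a : ℕ → ℕ} (ha : Function.Injective a) {K : Set ℝ}
    (hK : Bornology.IsBounded K) :
    TendstoUniformlyOn (fun N x => ∑ k ∈ Finset.range N, summand a k x) (PRfun a) atTop K :=
  tendstoUniformlyOn_sum_range_of_eventually_eq_zero (eventually_summand_eq_zero_on_bounded ha hK)

theorem PRfun_eventuallyEq_summand {a : ℕ → ℕ} (ha : Function.Injective a) (k : ℕ) :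
    PRfun a =ᶠ[𝓝 (a k : ℝ)] summand a k := by
  filter_upwards [Metric.ball_mem_nhds (a k : ℝ) one_half_pos] with x hx
  refine tsum_eq_single k fun j hj => ?_
  by_contra hne
  exact hj (ha (eq_of_summand_ne_zero hx hne))

theorem PRfun_eventuallyEq_zero {a : ℕ → ℕ} {n : ℕ} (h : ∀ k, 2 ≤ k → n ≠ a k) :
    PRfun a =ᶠ[𝓝 (n : ℝ)] 0 := by
  filter_upwards [Metric.ball_mem_nhds (n : ℝ) one_half_pos] with x hx
  have hzero : ∀ j, summand a j x = 0 := fun j => by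
    by_contra hne
    exact h j (summand_ne_zero hne).1 (eq_of_summand_ne_zero hx hne).symm
  simp [PRfun, hzero]

theorem hasDerivAt_summand (a : ℕ → ℕ) {k : ℕ} (hk : 2 ≤ k) :
    HasDerivAt (summand a k) (k * deriv bumpFn (-(1 / 2))) (a k) := by
  have hsummand :
      summand a k = fun x => 1 / (k : ℝ) * bumpFn ((k : ℝ) ^ 2 * (x - a k) - 1 / 2) := by
    funext x
    simp only [summand, psik, psiFn, if_pos hk]
  have hinner :
      HasDerivAt (fun x : ℝ => (k : ℝ) ^ 2 * (x - a k) - 1 / 2) ((k : ℝ) ^ 2) (a k) := by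
    simpa using (((hasDerivAt_id _).sub_const (a k : ℝ)).const_mul ((k : ℝ) ^ 2)).sub_const (1 / 2)
  have hbump : HasDerivAt bumpFn (deriv bumpFn (-(1 / 2)))
      ((k : ℝ) ^ 2 * ((a k : ℝ) - a k) - 1 / 2) := by
    rw [sub_self, mul_zero, zero_sub]
    exact (differentiable_bumpFn _).hasDerivAt
  have hk0 : (k : ℝ) ≠ 0 := by positivity
  rw [hsummand]
  exact ((hbump.comp (a k : ℝ) hinner).const_mul (1 / (k : ℝ))).congr_deriv (by field_simp)

theorem stmt_6 (a : ℕ → ℕ) (ha : Function.Injective a) :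
    (∀ K : Set ℝ, IsCompact K →
      TendstoUniformlyOn (fun N x => ∑ k ∈ Finset.range N, summand a k x)
        (PRfun a) Filter.atTop K) ∧
    Continuous (PRfun a) ∧
    (∀ n : ℕ,
      (∀ k : ℕ, 2 ≤ k → n = a k → deriv (PRfun a) n = k * deriv bumpFn (-(1 / 2))) ∧
      ((∀ k : ℕ, 2 ≤ k → n ≠ a k) → deriv (PRfun a) n = 0)) := by
  have huniform := fun K (hK : IsCompact K) => tendstoUniformlyOn_PRfun ha hK.isBounded
  have hcont : Continuous (PRfun a) :=
    (tendstoLocallyUniformly_iff_forall_isCompact.2 huniform).continuous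
      (Frequently.of_forall fun N => continuous_finsetSum _ fun k _ => continuous_summand a k)
  refine ⟨huniform, hcont, fun n => ⟨fun k hk hn => ?_, fun h => ?_⟩⟩
  · rw [hn, (PRfun_eventuallyEq_summand ha k).deriv_eq]
    exact (hasDerivAt_summand a hk).deriv
  · rw [(PRfun_eventuallyEq_zero h).deriv_eq]
    exact deriv_const _ _
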